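/- For all t ≥ 1, R_2^{(A)}(2^t + 1) = 2/3 + 2^t/8 − (−2)^t/24 as rational numbers. -/

import Mathlib

/-- The Thue-Morse sequence: t 0 = 0, t (2n) = t n, t (2n+1) = 1 - t n. -/
def tm (n : ℕ) : ℕ :=
  if h : n = 0 then 0
  else if n % 2 = 0 then tm (n / 2) else 1 - tm (n / 2)
decreasing_by all_goals exact Nat.div_lt_self (Nat.pos_of_ne_zero h) one_lt_two

/-- R₂ for the evil numbers A = {n : t n = 0}. -/
noncomputable def R2A (n : ℕ) : ℕ :=
  Nat.card {p : ℕ × ℕ | tm p.1 = 0 ∧ tm p.2 = 0 ∧ p.1 < p.2 ∧ p.1 + p.2 = n}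

/-!
Of two numbers with odd sum `2n + 1` one is even and one is odd, and `t (2a) = t a`,
`t (2b + 1) = 1 - t b`; so `{2a, 2b + 1}` matches the pairs counted by `R2A (2n + 1)` with the
ordered pairs `(a, b)`, `a + b = n`, `t a = 0`, `t b = 1`. Let `E n` be their number. Splitting
`a + b = 2n + 2` by parity gives `E (2n + 2) = E (n + 1) + E n`, the odd pairs `(2a + 1, 2b + 1)`
being those of `E n` with the roles of `a` and `b` swapped. If `a + b = 2^m - 1` then `b` is the
`m`-bit complement of `a`, so `t b ≡ t a + m (mod 2)`: `E (2^m - 1)` is `0` for even `m` and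
`2^(m-1)` for odd `m`, and `E (2^(s+1)) = E (2^s) + E (2^s - 1)` sums to
`E (2^s) = 2/3 + 2^s/4 + (-2)^s/12`.
-/

open Finset

lemma tm_zero : tm 0 = 0 := by
  rw [tm]; rfl

lemma tm_two_mul (n : ℕ) : tm (2 * n) = tm n := by
  rcases n.eq_zero_or_pos with rfl | hn
  · rfl
  · rw [tm, dif_neg (by omega), if_pos (by omega), Nat.mul_div_cancel_left n two_pos]

lemma tm_two_mul_add_one (n : ℕ) : tm (2 * n + 1) = 1 - tm n := by
  rw [tm, dif_neg (by omega), if_neg (by omega), Nat.mul_add_div two_pos]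
  rfl

lemma tm_le_one (n : ℕ) : tm n ≤ 1 := by
  induction n using Nat.strong_induction_on with
  | _ n ih =>
    obtain ⟨k, rfl | rfl⟩ := n.even_or_odd'
    · rcases k.eq_zero_or_pos with rfl | hk
      · simp [tm_zero]
      · rw [tm_two_mul]; exact ih k (by omega)
    · rw [tm_two_mul_add_one]; omega

lemma tm_one : tm 1 = 1 := by
  simpa [tm_zero] using tm_two_mul_add_one 0

lemma tm_two_mul_add_one_eq_zero_iff (n : ℕ) : tm (2 * n + 1) = 0 ↔ tm n = 1 := by
  have := tm_le_one n
  rw [tm_two_mul_add_one]; omega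

lemma tm_two_mul_add_one_eq_one_iff (n : ℕ) : tm (2 * n + 1) = 1 ↔ tm n = 0 := by
  have := tm_le_one n
  rw [tm_two_mul_add_one]; omega

lemma tm_eq_of_add_add_one_eq_two_pow {m a b : ℕ} (h : a + b + 1 = 2 ^ m) :
    tm b = (tm a + m) % 2 := by
  induction m generalizing a b with
  | zero =>
    obtain ⟨rfl, rfl⟩ : a = 0 ∧ b = 0 := by rw [pow_zero] at h; omega
    simp [tm_zero]
  | succ m ih =>
    rw [pow_succ] at h
    obtain ⟨a, rfl | rfl⟩ := a.even_or_odd' <;> obtain ⟨b, rfl | rfl⟩ := b.even_or_odd' <;>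
      try omega
    all_goals
      have := ih (a := a) (b := b) (by omega)
      have := tm_le_one a
      rw [tm_two_mul, tm_two_mul_add_one]
      omega

lemma card_filter_antidiagonal_swap (n : ℕ) (P : ℕ → ℕ → Prop) [DecidableRel P] :
    #{p ∈ antidiagonal n | P p.1 p.2} = #{p ∈ antidiagonal n | P p.2 p.1} := by
  conv_lhs => rw [← HasAntidiagonal.map_swap_antidiagonal, filter_map, card_map]
  rfl

lemma antidiagonal_two_mul_add_two (n : ℕ) :
    antidiagonal (2 * n + 2) =
      (antidiagonal (n + 1)).image (fun p ↦ (2 * p.1, 2 * p.2)) ∪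
        (antidiagonal n).image (fun p ↦ (2 * p.1 + 1, 2 * p.2 + 1)) := by
  ext ⟨x, y⟩
  simp only [mem_union, mem_image, HasAntidiagonal.mem_antidiagonal, Prod.exists, Prod.mk.injEq]
  constructor
  · intro h
    obtain ⟨a, rfl | rfl⟩ := x.even_or_odd'
    · exact .inl ⟨a, y / 2, by omega, rfl, by omega⟩
    · exact .inr ⟨a, y / 2, by omega, rfl, by omega⟩
  · rintro (⟨a, b, h, rfl, rfl⟩ | ⟨a, b, h, rfl, rfl⟩) <;> omega

lemma card_filter_antidiagonal_two_mul_add_two (n : ℕ) (P : ℕ → ℕ → Prop) [DecidableRel P] :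
    #{p ∈ antidiagonal (2 * n + 2) | P p.1 p.2} =
      #{p ∈ antidiagonal (n + 1) | P (2 * p.1) (2 * p.2)} +
        #{p ∈ antidiagonal n | P (2 * p.1 + 1) (2 * p.2 + 1)} := by
  have h_disj : Disjoint ((antidiagonal (n + 1)).image (fun p ↦ (2 * p.1, 2 * p.2)))
      ((antidiagonal n).image (fun p ↦ (2 * p.1 + 1, 2 * p.2 + 1))) := by
    simp only [disjoint_left, mem_image]
    rintro _ ⟨p, -, rfl⟩ ⟨q, -, h⟩
    simp only [Prod.mk.injEq] at h
    omega
  rw [antidiagonal_two_mul_add_two, filter_union,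
    card_union_of_disjoint (h_disj.mono (filter_subset _ _) (filter_subset _ _)),
    filter_image, filter_image, card_image_of_injective, card_image_of_injective]
  all_goals
    intro p q h
    simp only [Prod.mk.injEq] at h
    ext <;> omega

def evilOdiousPairs (n : ℕ) : Finset (ℕ × ℕ) :=
  {p ∈ antidiagonal n | tm p.1 = 0 ∧ tm p.2 = 1}

lemma R2A_eq_card (n : ℕ) :
    R2A n = #{p ∈ antidiagonal n | tm p.1 = 0 ∧ tm p.2 = 0 ∧ p.1 < p.2} := by
  rw [R2A, ← Nat.card_eq_finsetCard]
  congr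
  ext
  simp only [mem_val, mem_filter, HasAntidiagonal.mem_antidiagonal]
  tauto

lemma R2A_two_mul_add_one (n : ℕ) : R2A (2 * n + 1) = #(evilOdiousPairs n) := by
  rw [R2A_eq_card, eq_comm]
  refine card_nbij (fun p ↦ if p.1 ≤ p.2 then (2 * p.1, 2 * p.2 + 1) else (2 * p.2 + 1, 2 * p.1))
    ?_ ?_ ?_
  · rintro ⟨a, b⟩ h
    simp only [evilOdiousPairs, coe_filter, HasAntidiagonal.mem_antidiagonal, Set.mem_ofPred_eq]
      at h ⊢
    obtain ⟨hsum, ha, hb⟩ := h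
    split_ifs <;>
      simp only [tm_two_mul, tm_two_mul_add_one_eq_zero_iff, ha, hb, true_and] <;> omega
  · rintro ⟨a, b⟩ - ⟨c, d⟩ - h
    dsimp only at h
    split_ifs at h <;> simp only [Prod.mk.injEq] at h ⊢ <;> omega
  · rintro ⟨x, y⟩ h
    simp only [coe_filter, HasAntidiagonal.mem_antidiagonal, Set.mem_ofPred_eq] at h
    obtain ⟨hsum, hx, hy, hlt⟩ := h
    obtain ⟨a, rfl | rfl⟩ := x.even_or_odd' <;> obtain ⟨b, rfl | rfl⟩ := y.even_or_odd' <;>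
      try omega
    · rw [tm_two_mul] at hx
      rw [tm_two_mul_add_one_eq_zero_iff] at hy
      refine ⟨(a, b), ?_, if_pos (by omega)⟩
      simp only [evilOdiousPairs, coe_filter, HasAntidiagonal.mem_antidiagonal, Set.mem_ofPred_eq]
      exact ⟨by omega, hx, hy⟩
    · rw [tm_two_mul_add_one_eq_zero_iff] at hx
      rw [tm_two_mul] at hy
      refine ⟨(b, a), ?_, if_neg (by omega)⟩
      simp only [evilOdiousPairs, coe_filter, HasAntidiagonal.mem_antidiagonal, Set.mem_ofPred_eq]
      exact ⟨by omega, hy, hx⟩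

lemma card_evilOdiousPairs_two_mul_add_two (n : ℕ) :
    #(evilOdiousPairs (2 * n + 2)) = #(evilOdiousPairs (n + 1)) + #(evilOdiousPairs n) := by
  simp only [evilOdiousPairs]
  rw [card_filter_antidiagonal_two_mul_add_two n (fun a b ↦ tm a = 0 ∧ tm b = 1)]
  simp only [tm_two_mul, tm_two_mul_add_one_eq_zero_iff, tm_two_mul_add_one_eq_one_iff]
  rw [card_filter_antidiagonal_swap n (fun a b ↦ tm a = 1 ∧ tm b = 0)]
  simp only [and_comm]

lemma tm_snd_of_mem_antidiagonal_two_pow_sub_one {m : ℕ} {p : ℕ × ℕ}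
    (hp : p ∈ antidiagonal (2 ^ m - 1)) : tm p.2 = (tm p.1 + m) % 2 := by
  rw [HasAntidiagonal.mem_antidiagonal] at hp
  have := Nat.one_le_two_pow (n := m)
  exact tm_eq_of_add_add_one_eq_two_pow (by omega)

lemma evilOdiousPairs_two_pow_sub_one_of_even {m : ℕ} (hm : Even m) :
    evilOdiousPairs (2 ^ m - 1) = ∅ := by
  refine filter_eq_empty_iff.mpr fun p hp ↦ ?_
  have := tm_snd_of_mem_antidiagonal_two_pow_sub_one hp
  have := Nat.even_iff.mp hm
  omega

lemma two_mul_card_evilOdiousPairs_two_pow_sub_one_of_odd {m : ℕ} (hm : Odd m) :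
    2 * #(evilOdiousPairs (2 ^ m - 1)) = 2 ^ m := by
  have h_flip : ∀ p ∈ antidiagonal (2 ^ m - 1), tm p.2 = 1 - tm p.1 := fun p hp ↦ by
    have := tm_snd_of_mem_antidiagonal_two_pow_sub_one hp
    have := Nat.odd_iff.mp hm
    have := tm_le_one p.1
    omega
  have h_evil : evilOdiousPairs (2 ^ m - 1) = {p ∈ antidiagonal (2 ^ m - 1) | tm p.1 = 0} :=
    filter_congr fun p hp ↦ by have := h_flip p hp; omega
  have h_odious : #{p ∈ antidiagonal (2 ^ m - 1) | ¬tm p.1 = 0} =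
      #{p ∈ antidiagonal (2 ^ m - 1) | tm p.1 = 0} := by
    rw [card_filter_antidiagonal_swap _ (fun a _ ↦ ¬tm a = 0)]
    congr 1
    exact filter_congr fun p hp ↦ by have := h_flip p hp; omega
  have h_total := card_filter_add_card_filter_not (s := antidiagonal (2 ^ m - 1))
    (fun p ↦ tm p.1 = 0)
  rw [h_odious, Nat.card_antidiagonal, Nat.sub_add_cancel Nat.one_le_two_pow] at h_total
  rw [h_evil, two_mul, h_total]

lemma card_evilOdiousPairs_two_pow_sub_one (m : ℕ) :
    (#(evilOdiousPairs (2 ^ m - 1)) : ℚ) = (2 ^ m - (-2) ^ m) / 4 := by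
  rcases m.even_or_odd with hm | hm
  · rw [evilOdiousPairs_two_pow_sub_one_of_even hm, hm.neg_pow, card_empty]
    simp
  · have := two_mul_card_evilOdiousPairs_two_pow_sub_one_of_odd hm
    rw [hm.neg_pow]
    have : (2 * #(evilOdiousPairs (2 ^ m - 1)) : ℚ) = 2 ^ m := by exact_mod_cast this
    linarith

lemma card_evilOdiousPairs_two_pow (s : ℕ) :
    (#(evilOdiousPairs (2 ^ s)) : ℚ) = 2 / 3 + 2 ^ s / 4 + (-2) ^ s / 12 := by
  induction s with
  | zero =>
    have : evilOdiousPairs 1 = {(0, 1)} := by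
      rw [evilOdiousPairs, Finset.Nat.antidiagonal_succ]
      simp [filter_insert, filter_singleton, tm_zero, tm_one]
    norm_num [this]
  | succ s ih =>
    have h := card_evilOdiousPairs_two_mul_add_two (2 ^ s - 1)
    have := Nat.one_le_two_pow (n := s)
    rw [show 2 * (2 ^ s - 1) + 2 = 2 ^ (s + 1) by rw [pow_succ]; omega,
      Nat.sub_add_cancel this] at h
    rw [h, Nat.cast_add, ih, card_evilOdiousPairs_two_pow_sub_one]
    ring

theorem r2a_pow_add_one_closed (t : ℕ) (ht : 1 ≤ t) :
    (R2A (2 ^ t + 1) : ℚ) = 2 / 3 + (2 : ℚ) ^ t / 8 - (-2 : ℚ) ^ t / 24 := by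
  obtain ⟨s, rfl⟩ : ∃ s, t = s + 1 := ⟨t - 1, by omega⟩
  rw [pow_succ, mul_comm, R2A_two_mul_add_one, card_evilOdiousPairs_two_pow]
  ring
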